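/- Let n ≥ 2, D > 1, α ≥ 0 and m with n + 2 + α < 2m. Then ∫_{ℝⁿ₊} x_n² |x̃|^α / (|x̃|² + (x_n + D)² - 1)^m dx = ω_{n-1} · I_m^{n-2+α} · φ̂_{(2m-n-α+1)/2}, where ω_{n-1} is the surface measure of the unit sphere in ℝ^{n-1}, I_m^β = ∫₀^∞ r^β/(1+r²)^m dr, and φ̂_s = ∫_D^∞ (t - D)² (t²-1)^{-s} dt. -/

import Mathlib

open Real MeasureTheory
open Set Metric
open scoped ENNReal

/-!
Write `x = (x̃, s)` with `s = x_n`. Then `‖x‖² + 2Dx_n + D² - 1 = ‖x̃‖² + c_s` with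
`c_s = (s + D)² - 1 > 0`, so polar coordinates in `x̃` followed by the scaling `r ↦ √c_s r` give
the inner integral `ω_{n-1} I_m^{n-2+α} c_s^{(n-1+α)/2 - m}`, and the substitution `t = s + D`
turns the outer integral over `s > 0` into `φ̂`. All of this is done for lower Lebesgue integrals,
where Tonelli needs no integrability; taking `ENNReal.toReal` gives the stated identity, a
divergent integral being `0` on both sides.
-/

theorem setIntegral_eq_toReal_setLIntegral_ofReal {X : Type*} [MeasurableSpace X] {μ : Measure X}
    {s : Set X} {f : X → ℝ} (hs : MeasurableSet s) (hf : Measurable f)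
    (hf_nonneg : ∀ x ∈ s, 0 ≤ f x) :
    ∫ x in s, f x ∂μ = (∫⁻ x in s, ENNReal.ofReal (f x) ∂μ).toReal :=
  integral_eq_lintegral_of_nonneg_ae ((ae_restrict_iff' hs).2 (.of_forall hf_nonneg))
    hf.aestronglyMeasurable

theorem lintegral_Ioi_eq_mul_lintegral_comp_mul_left {a : ℝ} (ha : 0 < a) (g : ℝ → ℝ≥0∞) :
    ∫⁻ x in Ioi 0, g x = ENNReal.ofReal a * ∫⁻ x in Ioi 0, g (a * x) := by
  have := lintegral_image_eq_lintegral_abs_deriv_mul (s := Ioi 0) measurableSet_Ioi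
    (fun x _ => ((hasDerivAt_id x).const_mul a).hasDerivWithinAt)
    (mul_right_injective₀ ha.ne').injOn g
  simp only [id, mul_one] at this
  rwa [image_mul_left_Ioi ha, mul_zero, abs_of_pos ha,
    lintegral_const_mul' _ _ ENNReal.ofReal_ne_top] at this

theorem lintegral_Ioi_comp_add_right (D : ℝ) (g : ℝ → ℝ≥0∞) :
    ∫⁻ x in Ioi 0, g (x + D) = ∫⁻ t in Ioi D, g t := by
  have := lintegral_image_eq_lintegral_abs_deriv_mul (s := Ioi 0) measurableSet_Ioi
    (fun x _ => ((hasDerivAt_id x).add_const D).hasDerivWithinAt) (add_left_injective D).injOn g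
  simpa using this.symm

theorem lintegral_Ioi_rpow_div_sq_add_rpow (β m : ℝ) {c : ℝ} (hc : 0 < c) :
    ∫⁻ r in Ioi 0, ENNReal.ofReal (r ^ β / (r ^ 2 + c) ^ m) =
      ENNReal.ofReal (c ^ ((β + 1) / 2 - m)) *
        ∫⁻ r in Ioi 0, ENNReal.ofReal (r ^ β / (1 + r ^ 2) ^ m) := by
  have ha : 0 < √c := sqrt_pos.2 hc
  have hscale : ∀ r ∈ Ioi (0 : ℝ), √c * ((√c * r) ^ β / ((√c * r) ^ 2 + c) ^ m) =
      c ^ ((β + 1) / 2 - m) * (r ^ β / (1 + r ^ 2) ^ m) := by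
    intro r (hr : 0 < r)
    have hsq : (√c * r) ^ 2 + c = c * (1 + r ^ 2) := by rw [mul_pow, sq_sqrt hc.le]; ring
    have hpow : √c * √c ^ β = c ^ ((β + 1) / 2) := by
      rw [sqrt_eq_rpow, ← rpow_mul hc.le, ← rpow_add hc]
      ring_nf
    rw [hsq, mul_rpow ha.le hr.le, mul_rpow hc.le (by positivity), rpow_sub hc, ← hpow]
    field_simp
  rw [lintegral_Ioi_eq_mul_lintegral_comp_mul_left ha,
    ← lintegral_const_mul' _ _ ENNReal.ofReal_ne_top,
    ← lintegral_const_mul' _ _ ENNReal.ofReal_ne_top]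
  refine setLIntegral_congr_fun measurableSet_Ioi fun r hr => ?_
  rw [← ENNReal.ofReal_mul ha.le, ← ENNReal.ofReal_mul (by positivity), hscale r hr]

section Radial

variable {E : Type*} [NormedAddCommGroup E] [NormedSpace ℝ E] [MeasurableSpace E] [BorelSpace E]
  [Nontrivial E] [FiniteDimensional ℝ E] (μ : Measure E) [μ.IsAddHaarMeasure]

theorem lintegral_fun_norm_addHaar {g : ℝ → ℝ≥0∞} (hg : Measurable g) :
    ∫⁻ x, g ‖x‖ ∂μ = Module.finrank ℝ E * μ (ball 0 1) *
      ∫⁻ r in Ioi 0, ENNReal.ofReal (r ^ (Module.finrank ℝ E - 1)) * g r := by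
  have hg' : Measurable fun p : sphere (0 : E) 1 × Ioi (0 : ℝ) => g p.2 := by fun_prop
  calc ∫⁻ x, g ‖x‖ ∂μ = ∫⁻ x : ({0}ᶜ : Set E), g ‖x.1‖ ∂μ.comap (↑) := by
        rw [lintegral_subtype_comap (measurableSet_singleton 0).compl (fun x => g ‖x‖),
          restrict_compl_singleton]
    _ = ∫⁻ p, g p.2 ∂μ.toSphere.prod (.volumeIoiPow (Module.finrank ℝ E - 1)) := by
        simpa using μ.measurePreserving_homeomorphUnitSphereProd.lintegral_comp hg'
    _ = Module.finrank ℝ E * μ (ball 0 1) *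
          ∫⁻ r : Ioi (0 : ℝ), g r ∂.volumeIoiPow (Module.finrank ℝ E - 1) := by
        rw [lintegral_prod _ hg'.aemeasurable]
        simp only [lintegral_const, μ.toSphere_apply_univ]
        rw [mul_comm]
    _ = _ := by
        rw [Measure.volumeIoiPow,
          lintegral_withDensity_eq_lintegral_mul _ (by fun_prop) (by fun_prop),
          ← lintegral_subtype_comap measurableSet_Ioi (fun r => ENNReal.ofReal (r ^ _) * g r)]
        rfl

theorem lintegral_norm_rpow_div_norm_sq_add_rpow (α m : ℝ) {c : ℝ} (hc : 0 < c) :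
    ∫⁻ x, ENNReal.ofReal (‖x‖ ^ α / (‖x‖ ^ 2 + c) ^ m) ∂μ =
      Module.finrank ℝ E * μ (ball 0 1) *
        ENNReal.ofReal (c ^ ((Module.finrank ℝ E + α) / 2 - m)) *
        ∫⁻ r in Ioi 0, ENNReal.ofReal (r ^ (Module.finrank ℝ E - 1 + α) / (1 + r ^ 2) ^ m) := by
  set d := Module.finrank ℝ E
  have hd : ((d - 1 : ℕ) : ℝ) = d - 1 := by rw [Nat.cast_sub Module.finrank_pos, Nat.cast_one]
  have hmerge :
      ∫⁻ r in Ioi 0, ENNReal.ofReal (r ^ (d - 1)) * ENNReal.ofReal (r ^ α / (r ^ 2 + c) ^ m) =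
        ∫⁻ r in Ioi 0, ENNReal.ofReal (r ^ ((d : ℝ) - 1 + α) / (r ^ 2 + c) ^ m) := by
    refine setLIntegral_congr_fun measurableSet_Ioi fun r (hr : 0 < r) => ?_
    rw [← ENNReal.ofReal_mul (by positivity), rpow_add hr, ← hd, rpow_natCast, mul_div_assoc]
  rw [lintegral_fun_norm_addHaar μ (g := fun r => ENNReal.ofReal (r ^ α / (r ^ 2 + c) ^ m))
    (by fun_prop), hmerge, lintegral_Ioi_rpow_div_sq_add_rpow _ _ hc,
    show (d : ℝ) - 1 + α + 1 = d + α by ring, ← mul_assoc]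

end Radial

namespace EuclideanSpace

variable {k : ℕ}

def piFinSuccAbove (i : Fin (k + 1)) (x : EuclideanSpace ℝ (Fin (k + 1))) :
    ℝ × EuclideanSpace ℝ (Fin k) :=
  (x i, WithLp.toLp 2 fun j => x (i.succAbove j))

theorem norm_sq_eq_sq_add_norm_sq_piFinSuccAbove (i : Fin (k + 1))
    (x : EuclideanSpace ℝ (Fin (k + 1))) :
    ‖x‖ ^ 2 = (piFinSuccAbove i x).1 ^ 2 + ‖(piFinSuccAbove i x).2‖ ^ 2 := by
  simp only [real_norm_sq_eq, piFinSuccAbove]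
  exact Fin.sum_univ_succAbove (fun j => x j ^ 2) i

theorem volume_preserving_piFinSuccAbove (i : Fin (k + 1)) :
    MeasurePreserving (piFinSuccAbove i) volume (volume.prod volume) :=
  (((MeasurePreserving.id volume).prod (PiLp.volume_preserving_toLp (Fin k))).comp
    (MeasureTheory.volume_preserving_piFinSuccAbove (fun _ => ℝ) i)).comp
    (volume_preserving_symm_measurableEquiv_toLp (Fin (k + 1)))

theorem lintegral_setOf_pos_apply (i : Fin (k + 1))
    {G : ℝ × EuclideanSpace ℝ (Fin k) → ℝ≥0∞} (hG : Measurable G) :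
    ∫⁻ x in {x : EuclideanSpace ℝ (Fin (k + 1)) | 0 < x i}, G (piFinSuccAbove i x) =
      ∫⁻ s in Ioi 0, ∫⁻ y, G (s, y) := by
  have hpre : piFinSuccAbove i ⁻¹' (Ioi 0 ×ˢ univ) = {x | 0 < x i} := by
    ext x; simp [piFinSuccAbove]
  rw [← hpre, (volume_preserving_piFinSuccAbove i).setLIntegral_comp_preimage
    (measurableSet_Ioi.prod .univ) hG, ← Measure.prod_restrict, Measure.restrict_univ,
    lintegral_prod _ hG.aemeasurable]

theorem natCast_mul_volumeReal_ball_zero_one (k : ℕ) [NeZero k] :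
    k * volume.real (ball (0 : EuclideanSpace ℝ (Fin k)) 1) =
      2 * π ^ ((k : ℝ) / 2) / Gamma ((k : ℝ) / 2) := by
  have hk : (0 : ℝ) < k := Nat.cast_pos.2 (NeZero.pos k)
  have hsqrt : √π ^ k = π ^ ((k : ℝ) / 2) := by
    rw [sqrt_eq_rpow, ← rpow_natCast, ← rpow_mul pi_nonneg, one_div_mul_eq_div]
  rw [measureReal_def, EuclideanSpace.volume_ball, Fintype.card_fin, ENNReal.ofReal_one, one_pow,
    one_mul, ENNReal.toReal_ofReal (by positivity), hsqrt, Gamma_add_one (by positivity)]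
  field_simp

end EuclideanSpace

theorem lintegral_halfSpace_sq_mul_rpow_div_rpow {k : ℕ} [NeZero k] (i : Fin (k + 1)) {D : ℝ}
    (hD : 1 < D) (α m : ℝ) :
    ∫⁻ x in {x : EuclideanSpace ℝ (Fin (k + 1)) | 0 < x i},
        ENNReal.ofReal (x i ^ 2 * (‖x‖ ^ 2 - x i ^ 2) ^ (α / 2) /
          (‖x‖ ^ 2 + 2 * D * x i + D ^ 2 - 1) ^ m) =
      k * volume (ball (0 : EuclideanSpace ℝ (Fin k)) 1) *
        (∫⁻ r in Ioi 0, ENNReal.ofReal (r ^ ((k : ℝ) - 1 + α) / (1 + r ^ 2) ^ m)) *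
        ∫⁻ t in Ioi D, ENNReal.ofReal ((t - D) ^ 2 * (t ^ 2 - 1) ^ (((k : ℝ) + α) / 2 - m)) := by
  set G : ℝ × EuclideanSpace ℝ (Fin k) → ℝ≥0∞ := fun p =>
    ENNReal.ofReal (p.1 ^ 2) *
      ENNReal.ofReal (‖p.2‖ ^ α / (‖p.2‖ ^ 2 + ((p.1 + D) ^ 2 - 1)) ^ m)
  have hslice : ∀ x, ENNReal.ofReal (x i ^ 2 * (‖x‖ ^ 2 - x i ^ 2) ^ (α / 2) /
      (‖x‖ ^ 2 + 2 * D * x i + D ^ 2 - 1) ^ m) = G (EuclideanSpace.piFinSuccAbove i x) := by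
    intro x
    have hnorm := EuclideanSpace.norm_sq_eq_sq_add_norm_sq_piFinSuccAbove i x
    set y := (EuclideanSpace.piFinSuccAbove i x).2
    have hrest : ‖x‖ ^ 2 - x i ^ 2 = ‖y‖ ^ 2 := by
      rw [hnorm]; simp [EuclideanSpace.piFinSuccAbove]
    have hden : ‖x‖ ^ 2 + 2 * D * x i + D ^ 2 - 1 = ‖y‖ ^ 2 + ((x i + D) ^ 2 - 1) := by
      rw [hnorm]; simp only [EuclideanSpace.piFinSuccAbove]; ring
    have hpow : (‖y‖ ^ 2) ^ (α / 2) = ‖y‖ ^ α := by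
      rw [← rpow_natCast, ← rpow_mul (norm_nonneg _)]
      congr 1
      ring
    rw [hrest, hden, hpow, mul_div_assoc, ENNReal.ofReal_mul (sq_nonneg _)]
    rfl
  -- `s + D - D` rather than `s`, so that the substitution `t = s + D` applies verbatim
  have hinner : ∀ s ∈ Ioi (0 : ℝ), ∫⁻ y, G (s, y) =
      (k * volume (ball (0 : EuclideanSpace ℝ (Fin k)) 1) *
        ∫⁻ r in Ioi 0, ENNReal.ofReal (r ^ ((k : ℝ) - 1 + α) / (1 + r ^ 2) ^ m)) *
      ENNReal.ofReal ((s + D - D) ^ 2 * ((s + D) ^ 2 - 1) ^ (((k : ℝ) + α) / 2 - m)) := by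
    intro s (hs : 0 < s)
    have hc : 0 < (s + D) ^ 2 - 1 := by nlinarith
    simp only [G]
    rw [lintegral_const_mul _ (by fun_prop), lintegral_norm_rpow_div_norm_sq_add_rpow _ _ _ hc,
      finrank_euclideanSpace_fin, add_sub_cancel_right, ENNReal.ofReal_mul (sq_nonneg _)]
    ring
  rw [lintegral_congr hslice, EuclideanSpace.lintegral_setOf_pos_apply i (by fun_prop),
    setLIntegral_congr_fun measurableSet_Ioi hinner, lintegral_const_mul _ (by fun_prop),
    lintegral_Ioi_comp_add_right D fun t =>
      ENNReal.ofReal ((t - D) ^ 2 * (t ^ 2 - 1) ^ (((k : ℝ) + α) / 2 - m))]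

/-- Half-space integral formula with an `x_n²` weight: for `n + 2 + α < 2m`,
`∫_{ℝⁿ₊} x_n²|x̃|^α/(|x̃|²+(x_n+D)²-1)^m dx = ω_{n-1} I_m^{n-2+α} φ̂_{(2m-n-α+1)/2}`,
where `ω_{n-1} = 2π^{(n-1)/2}/Γ((n-1)/2)`, `I_m^β = ∫₀^∞ r^β/(1+r²)^m dr` and
`φ̂_s = ∫_D^∞ (t-D)²(t²-1)^{-s} dt`. -/
theorem halfspace_weighted_integral_formula (n : ℕ) (hn : 2 ≤ n) (D α m : ℝ)
    (hD : 1 < D) :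
    (∫ x in {x : EuclideanSpace ℝ (Fin n) | 0 < x ⟨n - 1, by omega⟩},
        (x ⟨n - 1, by omega⟩) ^ 2 * (‖x‖ ^ 2 - (x ⟨n - 1, by omega⟩) ^ 2) ^ (α / 2) /
          (‖x‖ ^ 2 + 2 * D * x ⟨n - 1, by omega⟩ + D ^ 2 - 1) ^ m) =
      (2 * Real.pi ^ (((n : ℝ) - 1) / 2) / Real.Gamma (((n : ℝ) - 1) / 2)) *
        (∫ r in Set.Ioi (0 : ℝ), r ^ ((n : ℝ) - 2 + α) / (1 + r ^ 2) ^ m) *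
        (∫ t in Set.Ioi D, (t - D) ^ 2 * (t ^ 2 - 1) ^ (-((2 * m - (n : ℝ) - α + 1) / 2))) := by
  obtain ⟨k, rfl⟩ : ∃ k, n = k + 1 := ⟨n - 1, by omega⟩
  have : NeZero k := ⟨by omega⟩
  set i : Fin (k + 1) := ⟨k + 1 - 1, by omega⟩
  have hx_nonneg : ∀ x ∈ {x : EuclideanSpace ℝ (Fin (k + 1)) | 0 < x i},
      0 ≤ x i ^ 2 * (‖x‖ ^ 2 - x i ^ 2) ^ (α / 2) / (‖x‖ ^ 2 + 2 * D * x i + D ^ 2 - 1) ^ m := by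
    intro x (hx : 0 < x i)
    have hxi : x i ^ 2 ≤ ‖x‖ ^ 2 := by
      simpa using pow_le_pow_left₀ (abs_nonneg _) (PiLp.norm_apply_le x i) 2
    have hden : 0 < ‖x‖ ^ 2 + 2 * D * x i + D ^ 2 - 1 := by nlinarith
    exact div_nonneg (mul_nonneg (sq_nonneg _) (rpow_nonneg (sub_nonneg.2 hxi) _))
      (rpow_pos_of_pos hden _).le
  rw [setIntegral_eq_toReal_setLIntegral_ofReal (by measurability) (by fun_prop) hx_nonneg,
    lintegral_halfSpace_sq_mul_rpow_div_rpow i hD,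
    show ((k + 1 : ℕ) : ℝ) - 2 + α = k - 1 + α by push_cast; ring,
    show -((2 * m - ((k + 1 : ℕ) : ℝ) - α + 1) / 2) = (k + α) / 2 - m by push_cast; ring,
    show ((k + 1 : ℕ) : ℝ) - 1 = k by push_cast; ring,
    setIntegral_eq_toReal_setLIntegral_ofReal measurableSet_Ioi (by fun_prop)
      fun r (hr : 0 < r) => by positivity,
    setIntegral_eq_toReal_setLIntegral_ofReal measurableSet_Ioi (by fun_prop)
      fun t (ht : D < t) => mul_nonneg (sq_nonneg _) (rpow_nonneg (by nlinarith) _)]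
  rw [ENNReal.toReal_mul, ENNReal.toReal_mul, ENNReal.toReal_mul, ENNReal.toReal_natCast,
    ← measureReal_def, EuclideanSpace.natCast_mul_volumeReal_ball_zero_one]
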